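/- arXiv:2012.07476 — 8 statements merged into one kernel-verified Lean document; each statement's English description precedes it below -/
import Mathlib

section
/- Let D > 0 and C ∈ ℝ. Let F : (0,∞) → ℝ be locally integrable and possess a one-sided limit F(t−) from the left and F(t+) from the right at every t > 0, as well as a right limit F(0+) at 0. Assume that F(τ₂+) + D ∫_{τ₁}^{τ₂} F(t) dt ≤ F(τ₁−) + C·(τ₂ − τ₁) holds for all 0 < τ₁ ≤ τ₂. Then for every t > 0 one has F(t−) ≤ exp(−D t)·(F(0+) − C/D) + C/D and F(t+) ≤ exp(−D t)·(F(0+) − C/D) + C/D. -/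
open MeasureTheory Filter Set
open scoped Topology

/-!
Fix `0 < t₀ ≤ t`. The hypothesis applied to `[τ, t]` says that
`u τ = F(t+) + D ∫_τ^t F - C (t - τ)` satisfies `u τ ≤ F(τ−)`, while the left derivative of `u`
at `τ` is `C - D F(τ−) ≤ C - D u τ`. Hence `exp (D τ) (u τ - C/D)` is nonincreasing on
`[t₀, t]`, which gives `F(t+) ≤ exp (-D (t - t₀)) (F(t₀−) - C/D) + C/D`. Right limits of `F`
converge to `F(t−)` as their base point increases to `t`, and left limits converge to `F(0+)`
as it decreases to `0`; passing to these limits yields both estimates.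
-/

theorem Filter.Tendsto.tendsto_of_eventually_tendsto_nhdsWithin
    {X Y : Type*} [TopologicalSpace X] [TopologicalSpace Y] [RegularSpace Y]
    {f g : X → Y} {W : Set X} {S : X → Set X} [∀ x, (𝓝[S x] x).NeBot] {x₀ : X} {y : Y}
    (hf : Tendsto f (𝓝[W] x₀) (𝓝 y)) (hW : IsOpen W)
    (hg : ∀ᶠ x in 𝓝[W] x₀, Tendsto f (𝓝[S x] x) (𝓝 (g x))) :
    Tendsto g (𝓝[W] x₀) (𝓝 y) := by
  refine (closed_nhds_basis y).tendsto_right_iff.2 fun N ⟨hN, hNc⟩ => ?_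
  have hfN : ∀ᶠ x in 𝓝[W] x₀, ∀ᶠ z in 𝓝[W] x, f z ∈ N :=
    eventually_eventually_nhdsWithin.2 (hf hN)
  filter_upwards [hfN, hg, self_mem_nhdsWithin] with x hxN hx hxW
  rw [hW.nhdsWithin_eq hxW] at hxN
  exact hNc.mem_of_tendsto hx (hxN.filter_mono nhdsWithin_le_nhds)

theorem nhdsWithin_inf_ae_le_nhdsWithin_diff {α : Type*} [TopologicalSpace α]
    [MeasurableSpace α] (μ : Measure α) [NullSingletonClass μ] (s : Set α) (a : α) :
    𝓝[s] a ⊓ ae μ ≤ 𝓝[s \ {a}] a := by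
  rw [sdiff_eq, nhdsWithin_inter']
  exact inf_le_inf_left _ (le_principal_iff.2 (compl_mem_ae_iff.2 (measure_singleton a)))

theorem hasDerivWithinAt_integral_Iic_of_tendsto_nhdsLT {f : ℝ → ℝ} {a b c : ℝ}
    (hf : IntervalIntegrable f volume a b) (hmeas : StronglyMeasurableAtFilter f (𝓝[≤] a))
    (hc : Tendsto f (𝓝[<] a) (𝓝 c)) :
    HasDerivWithinAt (fun u => ∫ x in u..b, f x) (-c) (Iic a) a :=
  intervalIntegral.integral_hasDerivWithinAt_of_tendsto_ae_left hf hmeas <|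
    hc.mono_left <| by
      simpa only [Iic_sdiff_right] using nhdsWithin_inf_ae_le_nhdsWithin_diff volume (Iic a) a

theorem image_le_of_deriv_left_nonpos {f f' : ℝ → ℝ} {a b : ℝ} (hab : a ≤ b)
    (hf : ContinuousOn f (Icc a b)) (hf' : ∀ x ∈ Ioc a b, HasDerivWithinAt f (f' x) (Iic x) x)
    (hf'_nonpos : ∀ x ∈ Ioc a b, f' x ≤ 0) : f b ≤ f a := by
  -- the comparison theorem below is stated for right derivatives, so reflect `[a, b]`
  have hrefl : MapsTo (fun s => a + b - s) (Icc a b) (Icc a b) := fun s hs =>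
    ⟨by linarith [hs.2], by linarith [hs.1]⟩
  have hmem : ∀ s ∈ Ico a b, a + b - s ∈ Ioc a b := fun s hs =>
    ⟨by linarith [hs.2], by linarith [hs.1]⟩
  have hderiv : ∀ s ∈ Ico a b, HasDerivWithinAt (fun s => f (a + b - s))
      (-f' (a + b - s)) (Ici s) s := fun s hs => by
    have hr : HasDerivWithinAt (fun s : ℝ => a + b - s) (-1) (Ici s) s :=
      ((hasDerivAt_id s).const_sub (a + b)).hasDerivWithinAt
    exact ((hf' _ (hmem s hs)).comp s hr fun x (hx : s ≤ x) => by
      simp only [mem_Iic]; linarith).congr_deriv (mul_neg_one _)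
  have := image_le_of_deriv_right_le_deriv_boundary (f := fun _ => f b) (f' := fun _ => 0)
    continuousOn_const (fun x _ => hasDerivWithinAt_const x _ _) (by simp)
    (hf.comp (by fun_prop) hrefl) hderiv
    (fun s hs => neg_nonneg.2 (hf'_nonpos _ (hmem s hs))) (right_mem_Icc.2 hab)
  simpa using this

theorem le_exp_mul_add_of_deriv_left_le {u u' : ℝ → ℝ} {a b C D : ℝ} (hD : D ≠ 0)
    (hab : a ≤ b) (hu : ContinuousOn u (Icc a b))
    (hu' : ∀ x ∈ Ioc a b, HasDerivWithinAt u (u' x) (Iic x) x)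
    (bound : ∀ x ∈ Ioc a b, u' x ≤ C - D * u x) :
    u b ≤ Real.exp (-D * (b - a)) * (u a - C / D) + C / D := by
  have hweighted := image_le_of_deriv_left_nonpos
    (f := fun x => Real.exp (D * x) * (u x - C / D))
    (f' := fun x => Real.exp (D * x) * (u' x - (C - D * u x))) hab (by fun_prop)
    (fun x hx => by
      have hexp := ((hasDerivAt_id x).const_mul D).exp.hasDerivWithinAt (s := Iic x)
      refine (hexp.mul ((hu' x hx).sub_const (C / D))).congr_deriv ?_
      simp only [id]
      field_simp
      ring)
    (fun x hx => mul_nonpos_of_nonneg_of_nonpos (Real.exp_pos _).le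
      (sub_nonpos.2 (bound x hx)))
  calc u b = Real.exp (-D * b) * (Real.exp (D * b) * (u b - C / D)) + C / D := by
        rw [← mul_assoc, ← Real.exp_add]; simp
    _ ≤ Real.exp (-D * b) * (Real.exp (D * a) * (u a - C / D)) + C / D := by
        gcongr
    _ = Real.exp (-D * (b - a)) * (u a - C / D) + C / D := by
        rw [← mul_assoc, ← Real.exp_add]; ring_nf

theorem le_of_forall_add_mul_integral_le {F Fm : ℝ → ℝ} {a b C D y : ℝ} (hD : 0 < D)
    (hab : a ≤ b) (hF : IntervalIntegrable F volume a b)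
    (hFm : ∀ τ ∈ Ioc a b, Tendsto F (𝓝[<] τ) (𝓝 (Fm τ)))
    (hineq : ∀ τ ∈ Icc a b, y + D * ∫ s in τ..b, F s ≤ Fm τ + C * (b - τ)) :
    y ≤ Real.exp (-D * (b - a)) * (Fm a - C / D) + C / D := by
  set u : ℝ → ℝ := fun τ => y + D * (∫ s in τ..b, F s) - C * (b - τ)
  have hu_le : ∀ τ ∈ Icc a b, u τ ≤ Fm τ := fun τ hτ => by
    linarith [hineq τ hτ]
  have hcont : ContinuousOn u (Icc a b) := by
    have := intervalIntegral.continuousOn_primitive_interval_left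
      ((intervalIntegrable_iff' (μ := volume)).1 hF)
    rw [uIcc_of_le hab] at this
    fun_prop
  have hderiv : ∀ τ ∈ Ioc a b, HasDerivWithinAt u (C - D * Fm τ) (Iic τ) τ := fun τ hτ => by
    have hmeas : StronglyMeasurableAtFilter F (𝓝[≤] τ) :=
      AEStronglyMeasurable.stronglyMeasurableAtFilter_of_mem hF.1.aestronglyMeasurable
        (Ioc_mem_nhdsLE_of_mem hτ)
    have hint := hasDerivWithinAt_integral_Iic_of_tendsto_nhdsLT
      (hF.mono_set (by rw [uIcc_of_le hab, uIcc_of_le hτ.2]; exact Icc_subset_Icc hτ.1.le le_rfl))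
      hmeas (hFm τ hτ)
    refine (((hint.const_mul D).const_add y).sub
      (((hasDerivAt_id τ).const_sub b).hasDerivWithinAt.const_mul C)).congr_deriv ?_
    ring
  have hbound := le_exp_mul_add_of_deriv_left_le (C := C) hD.ne' hab hcont hderiv
    fun τ hτ => sub_le_sub_left (mul_le_mul_of_nonneg_left
      (hu_le τ (Ioc_subset_Icc_self hτ)) hD.le) C
  calc y = u b := by simp [u]
    _ ≤ _ := hbound
    _ ≤ _ := by gcongr; exact hu_le a (left_mem_Icc.2 hab)

/-- Gronwall-type estimate for BV functions: if `F` is locally integrable on `(0,∞)`,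
possesses one-sided limits `Fm t` (from the left) and `Fp t` (from the right) at every
`t > 0` as well as a right limit `Fp 0` at `0`, and satisfies
`F(τ₂+) + D ∫_{τ₁}^{τ₂} F ≤ F(τ₁−) + C (τ₂ − τ₁)` for all `0 < τ₁ ≤ τ₂`, then
`F(t±) ≤ exp(−Dt) (F(0+) − C/D) + C/D` for all `t > 0`. -/
theorem stmt_0 (D C : ℝ) (hD : 0 < D) (F Fm Fp : ℝ → ℝ)
    (hloc : ∀ a b : ℝ, 0 < a → a ≤ b → IntervalIntegrable F volume a b)
    (hFm : ∀ t : ℝ, 0 < t → Tendsto F (nhdsWithin t (Iio t)) (nhds (Fm t)))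
    (hFp : ∀ t : ℝ, 0 ≤ t → Tendsto F (nhdsWithin t (Ioi t)) (nhds (Fp t)))
    (hineq : ∀ τ₁ τ₂ : ℝ, 0 < τ₁ → τ₁ ≤ τ₂ →
      Fp τ₂ + D * ∫ t in τ₁..τ₂, F t ≤ Fm τ₁ + C * (τ₂ - τ₁)) :
    ∀ t : ℝ, 0 < t →
      Fm t ≤ Real.exp (-D * t) * (Fp 0 - C / D) + C / D ∧
      Fp t ≤ Real.exp (-D * t) * (Fp 0 - C / D) + C / D := by
  set bound : ℝ → ℝ → ℝ := fun t₀ t => Real.exp (-D * (t - t₀)) * (Fm t₀ - C / D) + C / D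
  have hFp_le : ∀ t₀ t, 0 < t₀ → t₀ ≤ t → Fp t ≤ bound t₀ t := fun t₀ t ht₀ ht =>
    le_of_forall_add_mul_integral_le hD ht (hloc t₀ t ht₀ ht)
      (fun τ hτ => hFm τ (ht₀.trans hτ.1))
      (fun τ hτ => hineq τ t (ht₀.trans_le hτ.1) hτ.2)
  have hFm_le : ∀ t₀ t, 0 < t₀ → t₀ < t → Fm t ≤ bound t₀ t := fun t₀ t ht₀ ht => by
    have hFp_lim : Tendsto Fp (𝓝[<] t) (𝓝 (Fm t)) :=
      (hFm t (ht₀.trans ht)).tendsto_of_eventually_tendsto_nhdsWithin isOpen_Iio <| by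
        filter_upwards [Ioo_mem_nhdsLT (ht₀.trans ht)] with s hs using hFp s hs.1.le
    refine le_of_tendsto_of_tendsto hFp_lim
      ((Continuous.tendsto (by fun_prop) t).mono_left nhdsWithin_le_nhds) ?_
    filter_upwards [Ioo_mem_nhdsLT ht] with s hs using hFp_le t₀ s ht₀ hs.1.le
  intro t ht
  have hFm_lim : Tendsto Fm (𝓝[>] 0) (𝓝 (Fp 0)) :=
    (hFp 0 le_rfl).tendsto_of_eventually_tendsto_nhdsWithin isOpen_Ioi <| by
      filter_upwards [self_mem_nhdsWithin] with s hs using hFm s hs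
  have hbound_lim : Tendsto (bound · t) (𝓝[>] 0)
      (𝓝 (Real.exp (-D * t) * (Fp 0 - C / D) + C / D)) := by
    have hexp : Tendsto (fun t₀ => Real.exp (-D * (t - t₀))) (𝓝[>] 0)
        (𝓝 (Real.exp (-D * t))) :=
      (Continuous.tendsto' (by fun_prop) 0 _ (by simp)).mono_left nhdsWithin_le_nhds
    exact (hexp.mul (hFm_lim.sub_const _)).add_const _
  have hsmall : ∀ᶠ t₀ in 𝓝[>] 0, t₀ ∈ Ioo 0 t := Ioo_mem_nhdsGT ht
  exact ⟨ge_of_tendsto hbound_lim (hsmall.mono fun t₀ h => hFm_le t₀ t h.1 h.2),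
    ge_of_tendsto hbound_lim (hsmall.mono fun t₀ h => hFp_le t₀ t h.1 h.2.le)⟩
end

section
/- Let θ > 0, q > 0 and D̄ ≥ 0. Let D : ℝ → ℝ be measurable with 0 ≤ D(t) ≤ D̄ for all t ∈ ℝ, and assume that D(t₂) + θ ∫_{t₁}^{t₂} D(s)^q ds ≤ D(t₁) holds for all real t₁ ≤ t₂. Then D(t) = 0 for every t ∈ ℝ. -/
open MeasureTheory Filter Set

/-! The inequality forces `D` to be antitone, so if `D t = c > 0` then `D ≥ c` on `(-∞, t]` and
the dissipation term gives `θ (t - t₁) c^q ≤ D t₁ - D t ≤ D̄` for every `t₁ ≤ t`, which fails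
once `t - t₁ > D̄ / (θ c^q)`. -/

section DissipativeInequality

variable {D f : ℝ → ℝ} {θ q M t₁ t : ℝ}

lemma intervalIntegrable_rpow_of_measurable_of_mem_Icc (hD : Measurable D)
    (hbdd : ∀ t, 0 ≤ D t ∧ D t ≤ M) (hq : 0 ≤ q) (a b : ℝ) :
    IntervalIntegrable (fun s => D s ^ q) volume a b :=
  (intervalIntegrable_const (c := M ^ q)).mono_fun' (hD.pow_const q).aestronglyMeasurable <|
    ae_of_all _ fun s => by
      show ‖D s ^ q‖ ≤ M ^ q
      rw [Real.norm_of_nonneg (Real.rpow_nonneg (hbdd s).1 q)]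
      exact Real.rpow_le_rpow (hbdd s).1 (hbdd s).2 hq

lemma antitone_of_add_mul_integral_le (hθ : 0 ≤ θ) (hf : ∀ s, 0 ≤ f s)
    (h : ∀ t₁ t₂ : ℝ, t₁ ≤ t₂ → D t₂ + θ * ∫ s in t₁..t₂, f s ≤ D t₁) : Antitone D := by
  intro t₁ t₂ ht
  have : 0 ≤ θ * ∫ s in t₁..t₂, f s :=
    mul_nonneg hθ (intervalIntegral.integral_nonneg ht fun s _ => hf s)
  linarith [h t₁ t₂ ht]

lemma mul_sub_mul_rpow_le_sub (hD : Antitone D)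
    (hDq : IntervalIntegrable (fun s => D s ^ q) volume t₁ t) (hθ : 0 ≤ θ) (hq : 0 ≤ q)
    (hDt : 0 ≤ D t)
    (h : D t + θ * ∫ s in t₁..t, D s ^ q ≤ D t₁) (ht : t₁ ≤ t) :
    θ * ((t - t₁) * D t ^ q) ≤ D t₁ - D t := by
  have hlow : ∫ _ in t₁..t, D t ^ q ≤ ∫ s in t₁..t, D s ^ q :=
    intervalIntegral.integral_mono_on ht intervalIntegrable_const hDq fun s hs =>
      Real.rpow_le_rpow hDt (hD hs.2) hq
  rw [intervalIntegral.integral_const, smul_eq_mul] at hlow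
  nlinarith

end DissipativeInequality

theorem stmt_2_general (θ q Dbar : ℝ) (hθ : 0 < θ) (hq : 0 < q)
    (D : ℝ → ℝ) (hmeas : Measurable D)
    (hbdd : ∀ t : ℝ, 0 ≤ D t ∧ D t ≤ Dbar)
    (hineq : ∀ t₁ t₂ : ℝ, t₁ ≤ t₂ → D t₂ + θ * ∫ s in t₁..t₂, (D s) ^ q ≤ D t₁) :
    ∀ t : ℝ, D t = 0 := by
  intro t
  by_contra hne
  have hDt : 0 < D t ^ q := Real.rpow_pos_of_pos (lt_of_le_of_ne (hbdd t).1 (Ne.symm hne)) q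
  have hanti : Antitone D :=
    antitone_of_add_mul_integral_le hθ.le (fun s => Real.rpow_nonneg (hbdd s).1 q) hineq
  set L := (Dbar + 1) / (θ * D t ^ q)
  have hL : 0 < L := div_pos (by linarith [(hbdd t).1, (hbdd t).2]) (mul_pos hθ hDt)
  have key := mul_sub_mul_rpow_le_sub hanti
    (intervalIntegrable_rpow_of_measurable_of_mem_Icc hmeas hbdd hq.le (t - L) t) hθ.le hq.le
    (hbdd t).1 (hineq (t - L) t (by linarith)) (by linarith)
  have hdiss : θ * ((t - (t - L)) * D t ^ q) = Dbar + 1 := by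
    simp only [sub_sub_cancel, L]
    field_simp
  linarith [(hbdd (t - L)).2, (hbdd t).1]

/-- Oscillation-defect decay: a measurable function `0 ≤ D ≤ D̄` on the whole real line
satisfying `D(t₂) + θ ∫_{t₁}^{t₂} D(s)^q ds ≤ D(t₁)` for all `t₁ ≤ t₂` vanishes
identically. -/
theorem stmt_2 (θ q Dbar : ℝ) (hθ : 0 < θ) (hq : 0 < q) (hDbar : 0 ≤ Dbar)
    (D : ℝ → ℝ) (hmeas : Measurable D)
    (hbdd : ∀ t : ℝ, 0 ≤ D t ∧ D t ≤ Dbar)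
    (hineq : ∀ t₁ t₂ : ℝ, t₁ ≤ t₂ → D t₂ + θ * ∫ s in t₁..t₂, (D s) ^ q ≤ D t₁) :
    ∀ t : ℝ, D t = 0 :=
  stmt_2_general θ q Dbar hθ hq D hmeas hbdd hineq
end

section
/- Let 0 < ρ* < ρ̄, β > 1 and p̄ > 0, and let p : [0, ρ̄) → [0, ∞) be continuous with (ρ̄ − ρ)^β · p(ρ) → p̄ as ρ → ρ̄ from the left. Define the pressure potential P(ρ) = ρ ∫_{ρ*}^{ρ} p(z)/z² dz for ρ ∈ (0, ρ̄). Then there exists a constant c > 0 such that (ρ̄ − ρ)^{1−β} ≤ c·(1 + P(ρ)) for all ρ ∈ [ρ*, ρ̄). -/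
/-!
Near `ρ̄` the hypothesis gives `p z ≥ (p̄/2) (ρ̄ - z)^(-β)` on some `(l, ρ̄)`. Since
`z² ≤ ρ̄²`, integrating `p z / z²` over `[l, ρ]` yields at least
`(p̄ / 2ρ̄²) ((ρ̄ - ρ)^(1-β) - (ρ̄ - l)^(1-β)) / (β - 1)`, which is where `β > 1` enters;
the prefactor `ρ ≥ ρ*` and the constant `(ρ̄ - l)^(1-β)` are absorbed into `c (1 + P)`.
-/

open MeasureTheory Filter Set Topology

theorem integral_sub_rpow_neg {a b c β : ℝ} (ha : a < c) (hb : b < c) (hβ : β ≠ 1) :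
    ∫ z in a..b, (c - z) ^ (-β) = ((c - b) ^ (1 - β) - (c - a) ^ (1 - β)) / (β - 1) := by
  have hβ' : -β ≠ -1 := by simpa using hβ
  have hzero : (0 : ℝ) ∉ uIcc (c - b) (c - a) := fun h => by
    rcases mem_uIcc.1 h with h | h <;> linarith [h.1]
  rw [intervalIntegral.integral_comp_sub_left (fun x => x ^ (-β)) c,
    integral_rpow (Or.inr ⟨hβ', hzero⟩), neg_add_eq_sub, ← neg_sub β 1, div_neg, ← neg_div,
    neg_sub]

theorem eventually_mul_rpow_neg_le_of_tendsto {p : ℝ → ℝ} {ρbar β pbar k : ℝ} (hk : k < pbar)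
    (hsing : Tendsto (fun ρ => (ρbar - ρ) ^ β * p ρ) (𝓝[<] ρbar) (𝓝 pbar)) :
    ∀ᶠ z in 𝓝[<] ρbar, k * (ρbar - z) ^ (-β) ≤ p z := by
  filter_upwards [hsing.eventually (eventually_gt_nhds hk), self_mem_nhdsWithin] with z hz hlt
  have hpos : 0 < (ρbar - z) ^ β := Real.rpow_pos_of_pos (sub_pos.2 hlt) β
  rw [Real.rpow_neg (sub_pos.2 hlt).le, ← div_eq_mul_inv, div_le_iff₀ hpos]
  linarith

theorem mul_integral_sub_rpow_neg_le_integral_div_sq {p : ℝ → ℝ} {a b c β k : ℝ} (ha : 0 < a)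
    (hab : a ≤ b) (hbc : b < c) (hk : 0 ≤ k) (hp : ContinuousOn p (Icc a b))
    (hbound : ∀ z ∈ Ioo a b, k * (c - z) ^ (-β) ≤ p z) :
    k / c ^ 2 * ∫ z in a..b, (c - z) ^ (-β) ≤ ∫ z in a..b, p z / z ^ 2 := by
  rw [← intervalIntegral.integral_const_mul]
  refine intervalIntegral.integral_mono_on_of_le_Ioo hab ?_ ?_ fun z hz => ?_
  · refine (ContinuousOn.mul continuousOn_const ?_).intervalIntegrable_of_Icc hab
    exact (continuousOn_const.sub continuousOn_id).rpow_const fun z hz =>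
      Or.inl (sub_pos.2 (hz.2.trans_lt hbc)).ne'
  · refine (hp.div (continuousOn_pow 2) fun z hz => ?_).intervalIntegrable_of_Icc hab
    exact pow_ne_zero 2 (ha.trans_le hz.1).ne'
  · have hz0 : 0 < z := ha.trans hz.1
    have hx : 0 ≤ (c - z) ^ (-β) := Real.rpow_nonneg (sub_pos.2 (hz.2.trans hbc)).le _
    calc k / c ^ 2 * (c - z) ^ (-β) = k * (c - z) ^ (-β) / c ^ 2 := by ring
      _ ≤ k * (c - z) ^ (-β) / z ^ 2 := by gcongr; linarith [hz.2]
      _ ≤ p z / z ^ 2 := by gcongr; exact hbound z hz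

theorem sub_rpow_one_sub_le_add_integral {p : ℝ → ℝ} {a b c β k : ℝ} (ha : 0 < a)
    (hab : a ≤ b) (hbc : b < c) (hβ : 1 < β) (hk : 0 < k) (hp : ContinuousOn p (Icc a b))
    (hbound : ∀ z ∈ Ioo a b, k * (c - z) ^ (-β) ≤ p z) :
    (c - b) ^ (1 - β) ≤ (c - a) ^ (1 - β) + c ^ 2 * (β - 1) / k * ∫ z in a..b, p z / z ^ 2 := by
  have hc : 0 < c := ha.trans_le hab |>.trans hbc
  have hβ₁ : 0 < β - 1 := sub_pos.2 hβ
  have h := mul_integral_sub_rpow_neg_le_integral_div_sq ha hab hbc hk.le hp hbound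
  rw [integral_sub_rpow_neg (hab.trans_lt hbc) hbc hβ.ne'] at h
  have hdiff : (c - b) ^ (1 - β) - (c - a) ^ (1 - β)
      ≤ c ^ 2 * (β - 1) / k * ∫ z in a..b, p z / z ^ 2 :=
    calc (c - b) ^ (1 - β) - (c - a) ^ (1 - β)
        = c ^ 2 * (β - 1) / k *
            (k / c ^ 2 * (((c - b) ^ (1 - β) - (c - a) ^ (1 - β)) / (β - 1))) := by
          field_simp
      _ ≤ c ^ 2 * (β - 1) / k * ∫ z in a..b, p z / z ^ 2 := by gcongr
  linarith

theorem integral_div_sq_nonneg {p : ℝ → ℝ} {a b c : ℝ} (ha : 0 ≤ a) (hab : a ≤ b) (hbc : b < c)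
    (hpos : ∀ z ∈ Ico 0 c, 0 ≤ p z) : 0 ≤ ∫ z in a..b, p z / z ^ 2 :=
  intervalIntegral.integral_nonneg hab fun z hz =>
    div_nonneg (hpos z ⟨ha.trans hz.1, hz.2.trans_lt hbc⟩) (sq_nonneg z)

theorem sub_rpow_one_sub_le_add_integral_of_tail_bound {p : ℝ → ℝ} {a l c β k ρ : ℝ}
    (ha : 0 < a) (hl : l ∈ Ico a c) (hβ : 1 < β) (hk : 0 < k) (hp : ContinuousOn p (Ico 0 c))
    (hpos : ∀ z ∈ Ico 0 c, 0 ≤ p z) (hbound : ∀ z ∈ Ioo l c, k * (c - z) ^ (-β) ≤ p z)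
    (hρ : ρ ∈ Ico a c) :
    (c - ρ) ^ (1 - β) ≤ (c - l) ^ (1 - β) + c ^ 2 * (β - 1) / k * ∫ z in a..ρ, p z / z ^ 2 := by
  have hI := integral_div_sq_nonneg ha.le hρ.1 hρ.2 hpos
  rcases le_or_gt ρ l with hρl | hlρ
  · have : (c - ρ) ^ (1 - β) ≤ (c - l) ^ (1 - β) :=
      Real.rpow_le_rpow_of_nonpos (sub_pos.2 hl.2) (by linarith) (by linarith)
    have : 0 ≤ c ^ 2 * (β - 1) / k * ∫ z in a..ρ, p z / z ^ 2 :=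
      mul_nonneg (div_nonneg (mul_nonneg (sq_nonneg c) (by linarith)) hk.le) hI
    linarith
  have hfi : IntervalIntegrable (fun z => p z / z ^ 2) volume a ρ :=
    ((hp.mono (Icc_subset_Ico ha.le hρ.2)).div (continuousOn_pow 2) fun z hz =>
      pow_ne_zero 2 (ha.trans_le hz.1).ne').intervalIntegrable_of_Icc hρ.1
  have htail : ∫ z in l..ρ, p z / z ^ 2 ≤ ∫ z in a..ρ, p z / z ^ 2 :=
    intervalIntegral.integral_mono_interval hl.1 hlρ.le le_rfl
      (ae_restrict_of_forall_mem measurableSet_Ioc fun z hz =>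
        div_nonneg (hpos z ⟨ha.le.trans hz.1.le, hz.2.trans_lt hρ.2⟩) (sq_nonneg z))
      hfi
  calc (c - ρ) ^ (1 - β) ≤ (c - l) ^ (1 - β) + c ^ 2 * (β - 1) / k * ∫ z in l..ρ, p z / z ^ 2 :=
        sub_rpow_one_sub_le_add_integral (ha.trans_le hl.1) hlρ.le hρ.2 hβ hk
          (hp.mono (Icc_subset_Ico (ha.le.trans hl.1) hρ.2))
          fun z hz => hbound z ⟨hz.1, hz.2.trans hρ.2⟩
    _ ≤ (c - l) ^ (1 - β) + c ^ 2 * (β - 1) / k * ∫ z in a..ρ, p z / z ^ 2 := by gcongr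

/-- Hard-sphere singularity lower bound for the pressure potential: if `p ≥ 0` is
continuous on `[0, ρ̄)` and `(ρ̄ − ρ)^β p(ρ) → p̄ > 0` as `ρ → ρ̄−` with `β > 1`, then the
pressure potential `P(ρ) = ρ ∫_{ρ*}^{ρ} p(z)/z² dz` satisfies
`(ρ̄ − ρ)^{1−β} ≤ c (1 + P(ρ))` on `[ρ*, ρ̄)` for some constant `c > 0`. -/
theorem stmt_6 (ρstar ρbar β pbar : ℝ) (h0 : 0 < ρstar) (h1 : ρstar < ρbar)
    (hβ : 1 < β) (hpbar : 0 < pbar) (p : ℝ → ℝ)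
    (hp : ContinuousOn p (Set.Ico 0 ρbar))
    (hpos : ∀ z ∈ Set.Ico (0 : ℝ) ρbar, 0 ≤ p z)
    (hsing : Tendsto (fun ρ : ℝ => (ρbar - ρ) ^ β * p ρ)
      (nhdsWithin ρbar (Set.Iio ρbar)) (nhds pbar)) :
    ∃ c > 0, ∀ ρ ∈ Set.Ico ρstar ρbar,
      (ρbar - ρ) ^ (1 - β) ≤ c * (1 + ρ * ∫ z in ρstar..ρ, p z / z ^ 2) := by
  obtain ⟨l, hl, hbound⟩ := (mem_nhdsLT_iff_exists_mem_Ico_Ioo_subset h1).1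
    (eventually_mul_rpow_neg_le_of_tendsto (half_lt_self hpbar) hsing)
  set C := (ρbar - l) ^ (1 - β)
  set K := ρbar ^ 2 * (β - 1) / (pbar / 2)
  have hC : 0 < C := Real.rpow_pos_of_pos (sub_pos.2 hl.2) _
  have hK : 0 < K := div_pos (mul_pos (pow_pos (h0.trans h1) 2) (sub_pos.2 hβ)) (half_pos hpbar)
  refine ⟨C + K / ρstar, by positivity, fun ρ hρ => ?_⟩
  set I := ∫ z in ρstar..ρ, p z / z ^ 2
  have hI : 0 ≤ I := integral_div_sq_nonneg h0.le hρ.1 hρ.2 hpos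
  have hX : (ρbar - ρ) ^ (1 - β) ≤ C + K * I :=
    sub_rpow_one_sub_le_add_integral_of_tail_bound h0 hl hβ (half_pos hpbar) hp hpos hbound hρ
  have hKI : K * I ≤ K / ρstar * (ρ * I) :=
    calc K * I = K * I * 1 := (mul_one _).symm
      _ ≤ K * I * (ρ / ρstar) := by gcongr; exact (one_le_div h0).2 hρ.1
      _ = K / ρstar * (ρ * I) := by ring
  have hCP : 0 ≤ C * (ρ * I) := mul_nonneg hC.le (mul_nonneg (h0.le.trans hρ.1) hI)
  calc (ρbar - ρ) ^ (1 - β) ≤ C + K * I := hX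
    _ ≤ C + C * (ρ * I) + K / ρstar + K / ρstar * (ρ * I) := by linarith [div_pos hK h0]
    _ = (C + K / ρstar) * (1 + ρ * I) := by ring
end

section
/- Let ρ̄ > 0, β > 0, ω > 0 and p̄ > 0, and let p : [0, ρ̄) → [0, ∞) be continuous with (ρ̄ − ρ)^β · p(ρ) → p̄ as ρ → ρ̄ from the left. Then there exists a constant c > 0 such that p(ρ)^{(β+ω)/β} ≤ c·(1 + p(ρ)·(ρ̄ − ρ)^{−ω}) for all ρ ∈ [0, ρ̄). -/
/-!
The weighted pressure `(ρ̄ - ρ)^β p(ρ)` is continuous on `[0, ρ̄)` and has a finite limit at `ρ̄`,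
so it is bounded by some `C`. Hence `p^{ω/β} ≤ C^{ω/β} (ρ̄ - ρ)^{-ω}`, and multiplying by `p` gives
`p^{(β+ω)/β} ≤ C^{ω/β} p (ρ̄ - ρ)^{-ω}`.
-/

open Filter Set Topology

theorem ContinuousOn.bddAbove_image_Ico_of_tendsto {α β : Type*}
    [ConditionallyCompleteLinearOrder α] [TopologicalSpace α] [OrderTopology α]
    [LinearOrder β] [TopologicalSpace β] [OrderTopology β] [NoMaxOrder β]
    {f : α → β} {a b : α} {L : β} (hf : ContinuousOn f (Ico a b))
    (hlim : Tendsto f (𝓝[<] b) (𝓝 L)) : BddAbove (f '' Ico a b) := by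
  have : Nonempty β := ⟨L⟩
  obtain ⟨L', hL'⟩ := exists_gt L
  rcases lt_or_ge a b with hab | hba
  · obtain ⟨l, hlb, hl⟩ :=
      (mem_nhdsLT_iff_exists_Ioo_subset' hab).1 (hlim (Iio_mem_nhds hL'))
    have hcover : Ico a b ⊆ Icc a l ∪ Ioo l b := fun x hx => by
      rcases le_or_gt x l with hxl | hlx
      exacts [Or.inl ⟨hx.1, hxl⟩, Or.inr ⟨hlx, hx.2⟩]
    refine BddAbove.mono (image_mono hcover) ?_
    rw [image_union, bddAbove_union]
    refine ⟨isCompact_Icc.bddAbove_image (hf.mono fun x hx => ⟨hx.1, hx.2.trans_lt hlb⟩),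
      L', ?_⟩
    rintro _ ⟨x, hx, rfl⟩
    exact (hl hx).le
  · simp [Ico_eq_empty_of_le hba]

theorem Real.rpow_add_div_le_of_rpow_mul_le {x t β ω C : ℝ} (hx : 0 ≤ x) (ht : 0 < t)
    (hβ : 0 < β) (hω : 0 ≤ ω) (h : t ^ β * x ≤ C) :
    x ^ ((β + ω) / β) ≤ C ^ (ω / β) * (x * t ^ (-ω)) := by
  have htβ : 0 < t ^ β := Real.rpow_pos_of_pos ht β
  have hC : 0 ≤ C := (mul_nonneg htβ.le hx).trans h
  have hx_le : x ≤ C * t ^ (-β) := by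
    rw [Real.rpow_neg ht.le, ← div_eq_mul_inv, le_div_iff₀ htβ, mul_comm]
    exact h
  have hpow : x ^ (ω / β) ≤ C ^ (ω / β) * t ^ (-ω) := calc
    x ^ (ω / β) ≤ (C * t ^ (-β)) ^ (ω / β) := by gcongr
    _ = C ^ (ω / β) * t ^ (-ω) := by
      rw [Real.mul_rpow hC (Real.rpow_nonneg ht.le _), ← Real.rpow_mul ht.le]
      field_simp
  calc x ^ ((β + ω) / β) = x * x ^ (ω / β) := by
        rw [add_div, div_self hβ.ne', Real.rpow_add' hx (by positivity), Real.rpow_one]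
    _ ≤ x * (C ^ (ω / β) * t ^ (-ω)) := by gcongr
    _ = C ^ (ω / β) * (x * t ^ (-ω)) := by ring

theorem stmt_7_general (ρbar β ω pbar : ℝ) (hβ : 0 < β) (hω : 0 < ω)
    (p : ℝ → ℝ)
    (hp : ContinuousOn p (Set.Ico 0 ρbar))
    (hpos : ∀ z ∈ Set.Ico (0 : ℝ) ρbar, 0 ≤ p z)
    (hsing : Tendsto (fun ρ : ℝ => (ρbar - ρ) ^ β * p ρ)
      (nhdsWithin ρbar (Set.Iio ρbar)) (nhds pbar)) :
    ∃ c > 0, ∀ ρ ∈ Set.Ico (0 : ℝ) ρbar,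
      p ρ ^ ((β + ω) / β) ≤ c * (1 + p ρ * (ρbar - ρ) ^ (-ω)) := by
  have hcont : ContinuousOn (fun ρ : ℝ => (ρbar - ρ) ^ β * p ρ) (Ico 0 ρbar) :=
    ((continuousOn_const.sub continuousOn_id).rpow_const fun _ _ => Or.inr hβ.le).mul hp
  obtain ⟨C, hC⟩ := hcont.bddAbove_image_Ico_of_tendsto hsing
  refine ⟨max (C ^ (ω / β)) 1, lt_max_of_lt_right one_pos, fun ρ hρ => ?_⟩
  have hweight : 0 ≤ p ρ * (ρbar - ρ) ^ (-ω) :=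
    mul_nonneg (hpos ρ hρ) (Real.rpow_nonneg (sub_nonneg.2 hρ.2.le) _)
  calc p ρ ^ ((β + ω) / β) ≤ C ^ (ω / β) * (p ρ * (ρbar - ρ) ^ (-ω)) :=
        Real.rpow_add_div_le_of_rpow_mul_le (hpos ρ hρ) (sub_pos.2 hρ.2) hβ hω.le
          (hC (mem_image_of_mem _ hρ))
    _ ≤ max (C ^ (ω / β)) 1 * (1 + p ρ * (ρbar - ρ) ^ (-ω)) := by
        gcongr
        · exact le_max_left _ _
        · linarith

/-- Pointwise higher-integrability bound for a hard-sphere pressure: if `p ≥ 0` is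
continuous on `[0, ρ̄)` and `(ρ̄ − ρ)^β p(ρ) → p̄ > 0` as `ρ → ρ̄−`, then
`p(ρ)^{(β+ω)/β} ≤ c (1 + p(ρ) (ρ̄ − ρ)^{−ω})` on `[0, ρ̄)` for some constant `c > 0`. -/
theorem stmt_7 (ρbar β ω pbar : ℝ) (hρbar : 0 < ρbar) (hβ : 0 < β) (hω : 0 < ω)
    (hpbar : 0 < pbar) (p : ℝ → ℝ)
    (hp : ContinuousOn p (Set.Ico 0 ρbar))
    (hpos : ∀ z ∈ Set.Ico (0 : ℝ) ρbar, 0 ≤ p z)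
    (hsing : Tendsto (fun ρ : ℝ => (ρbar - ρ) ^ β * p ρ)
      (nhdsWithin ρbar (Set.Iio ρbar)) (nhds pbar)) :
    ∃ c > 0, ∀ ρ ∈ Set.Ico (0 : ℝ) ρbar,
      p ρ ^ ((β + ω) / β) ≤ c * (1 + p ρ * (ρbar - ρ) ^ (-ω)) :=
  stmt_7_general ρbar β ω pbar hβ hω p hp hpos hsing
end

section
/- Let (Q, μ) be a measure space with total mass |Q| := μ(Q) satisfying 0 < |Q| < ∞, let ρ̄ > 0, δ > 0, and let p : [0, ρ̄) → [0, ∞) be nondecreasing. Let ρ : Q → [0, ρ̄) be measurable with p∘ρ integrable, set M = ∫_Q ρ dμ, and assume M/|Q| ≤ ρ̄ − δ. Put r = (M/|Q| + ρ̄)/2. Then ∫_Q p(ρ)·(ρ − M/|Q|) dμ ≥ (δ/2)·∫_Q p(ρ) dμ − |Q|·( r·p(r) + (δ/2)·p(r) ). -/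
open MeasureTheory Filter Set

/-!
Split `Q` according to whether `ρ ≥ r` or `ρ < r`. Where `ρ ≥ r` the factor `ρ - M/|Q|` is at
least `r - M/|Q| ≥ δ/2`, so `p(ρ)(ρ - M/|Q|) ≥ (δ/2) p(ρ)`. Where `ρ < r` monotonicity gives
`p(ρ) ≤ p(r)`, so the integrand is at least `-(M/|Q|) p(r) ≥ -r p(r)` and `(δ/2) p(ρ) ≤ (δ/2) p(r)`.
Integrating this pointwise bound over `Q` gives the claim.
-/

theorem le_mul_sub_of_monotoneOn_Ico {p : ℝ → ℝ} {ρbar r m ε z : ℝ}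
    (hpm : MonotoneOn p (Ico 0 ρbar)) (hpnn : ∀ y ∈ Ico 0 ρbar, 0 ≤ p y)
    (hr : r ∈ Ico 0 ρbar) (hm0 : 0 ≤ m) (hε : 0 ≤ ε) (hεr : ε ≤ r - m) (hz : z ∈ Ico 0 ρbar) :
    ε * p z - (r * p r + ε * p r) ≤ p z * (z - m) := by
  have hpz : 0 ≤ p z := hpnn z hz
  have hpr : 0 ≤ p r := hpnn r hr
  rcases le_or_gt r z with hrz | hzr
  · have : ε * p z ≤ p z * (z - m) := by nlinarith
    nlinarith [hr.1]
  · have hle : p z ≤ p r := hpm hz hr hzr.le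
    have hmp : m * p z ≤ r * p r := mul_le_mul (by linarith) hle hpz hr.1
    nlinarith [mul_nonneg hz.1 hpz]

theorem const_mul_integral_sub_le_integral {Q : Type*} [MeasurableSpace Q] {μ : Measure Q}
    [IsFiniteMeasure μ] {f g : Q → ℝ} (hf : Integrable f μ) (hg : Integrable g μ) {c K : ℝ}
    (hfg : ∀ x, c * f x - K ≤ g x) :
    c * ∫ x, f x ∂μ - μ.real univ * K ≤ ∫ x, g x ∂μ :=
  calc c * ∫ x, f x ∂μ - μ.real univ * K = ∫ x, (c * f x - K) ∂μ := by
        rw [integral_sub (hf.const_mul c) (integrable_const K), integral_const_mul,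
          integral_const, smul_eq_mul]
    _ ≤ ∫ x, g x ∂μ := integral_mono ((hf.const_mul c).sub (integrable_const K)) hg hfg

theorem stmt_8_general {Q : Type*} [MeasurableSpace Q] (μ : Measure Q) [IsFiniteMeasure μ]
    (hQ : 0 < (μ Set.univ).toReal)
    (ρbar δ : ℝ) (hδ : 0 < δ) (p : ℝ → ℝ)
    (hpm : MonotoneOn p (Set.Ico 0 ρbar))
    (hpnn : ∀ z ∈ Set.Ico (0 : ℝ) ρbar, 0 ≤ p z)
    (ρ : Q → ℝ) (hρmeas : Measurable ρ)
    (hρb : ∀ x, ρ x ∈ Set.Ico (0 : ℝ) ρbar)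
    (hint : Integrable (fun x => p (ρ x)) μ)
    (hM : (∫ x, ρ x ∂μ) / (μ Set.univ).toReal ≤ ρbar - δ) :
    (δ / 2) * (∫ x, p (ρ x) ∂μ)
      - (μ Set.univ).toReal *
        (((∫ x, ρ x ∂μ) / (μ Set.univ).toReal + ρbar) / 2
            * p (((∫ x, ρ x ∂μ) / (μ Set.univ).toReal + ρbar) / 2)
          + (δ / 2) * p (((∫ x, ρ x ∂μ) / (μ Set.univ).toReal + ρbar) / 2))
      ≤ ∫ x, p (ρ x) * (ρ x - (∫ x, ρ x ∂μ) / (μ Set.univ).toReal) ∂μ := by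
  set m := (∫ x, ρ x ∂μ) / (μ Set.univ).toReal
  have hm0 : 0 ≤ m := div_nonneg (integral_nonneg fun x => (hρb x).1) hQ.le
  have hr : (m + ρbar) / 2 ∈ Ico 0 ρbar := ⟨by linarith, by linarith⟩
  have hbound : ∀ᵐ x ∂μ, ‖ρ x - m‖ ≤ ρbar + m := ae_of_all _ fun x =>
    abs_le.2 ⟨by linarith [(hρb x).1], by linarith [(hρb x).2]⟩
  refine const_mul_integral_sub_le_integral hint
    (hint.mul_bdd (hρmeas.sub measurable_const).aestronglyMeasurable hbound) fun x => ?_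
  exact le_mul_sub_of_monotoneOn_Ico hpm hpnn hr hm0 (by linarith) (by linarith) (hρb x)

/-- Lower bound on the mass-weighted pressure integral: on a finite measure space `Q`
of positive total mass `|Q|`, for a nondecreasing nonnegative pressure law `p` on
`[0, ρ̄)` and a density `0 ≤ ρ < ρ̄` of total mass `M = ∫ ρ` with `M/|Q| ≤ ρ̄ − δ`,
setting `r = (M/|Q| + ρ̄)/2` one has
`∫ p(ρ)(ρ − M/|Q|) ≥ (δ/2) ∫ p(ρ) − |Q| (r p(r) + (δ/2) p(r))`. -/
theorem stmt_8 {Q : Type*} [MeasurableSpace Q] (μ : Measure Q) [IsFiniteMeasure μ]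
    (hQ : 0 < (μ Set.univ).toReal)
    (ρbar δ : ℝ) (hρbar : 0 < ρbar) (hδ : 0 < δ) (p : ℝ → ℝ)
    (hpm : MonotoneOn p (Set.Ico 0 ρbar))
    (hpnn : ∀ z ∈ Set.Ico (0 : ℝ) ρbar, 0 ≤ p z)
    (ρ : Q → ℝ) (hρmeas : Measurable ρ)
    (hρb : ∀ x, ρ x ∈ Set.Ico (0 : ℝ) ρbar)
    (hint : Integrable (fun x => p (ρ x)) μ)
    (hM : (∫ x, ρ x ∂μ) / (μ Set.univ).toReal ≤ ρbar - δ) :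
    (δ / 2) * (∫ x, p (ρ x) ∂μ)
      - (μ Set.univ).toReal *
        (((∫ x, ρ x ∂μ) / (μ Set.univ).toReal + ρbar) / 2
            * p (((∫ x, ρ x ∂μ) / (μ Set.univ).toReal + ρbar) / 2)
          + (δ / 2) * p (((∫ x, ρ x ∂μ) / (μ Set.univ).toReal + ρbar) / 2))
      ≤ ∫ x, p (ρ x) * (ρ x - (∫ x, ρ x ∂μ) / (μ Set.univ).toReal) ∂μ :=
  stmt_8_general μ hQ ρbar δ hδ p hpm hpnn ρ hρmeas hρb hint hM
end

section
/- Let (Q, μ) be a finite measure space, ρ̄ > 0, and let p : [0, ρ̄] → ℝ be continuous and nondecreasing. Let ρ_n, ρ : Q → [0, ρ̄] be measurable functions and b, c : Q → ℝ be integrable functions such that for every bounded measurable g : Q → ℝ one has ∫_Q ρ_n·g dμ → ∫_Q ρ·g dμ, ∫_Q p(ρ_n)·g dμ → ∫_Q b·g dμ, and ∫_Q p(ρ_n)·ρ_n·g dμ → ∫_Q c·g dμ as n → ∞. Then c(x) ≥ b(x)·ρ(x) for μ-almost every x ∈ Q. -/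
/-!
Minty's trick. By monotonicity `(p(ρₙ) - p(ρ)) (ρₙ - ρ) ≥ 0` pointwise. Tested against a
nonnegative bounded `g`, the four terms of its expansion converge to `∫ c g`, `∫ b ρ g`,
`∫ p(ρ) ρ g` and `∫ p(ρ) ρ g` (each is a weak limit against a bounded test function, since
`ρ` and `p(ρ)` are bounded), so `∫ (c - b ρ) g ≥ 0`; indicator functions give `c ≥ b ρ` a.e.
-/

open MeasureTheory Filter Set

section

variable {Q : Type*} [MeasurableSpace Q] {μ : Measure Q}

def BoundedMeasurable (g : Q → ℝ) : Prop :=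
  Measurable g ∧ ∃ B : ℝ, ∀ x, |g x| ≤ B

def TendstoWeakly (μ : Measure Q) (u : ℕ → Q → ℝ) (v : Q → ℝ) : Prop :=
  ∀ g : Q → ℝ, Measurable g → (∃ B : ℝ, ∀ x, |g x| ≤ B) →
    Tendsto (fun n => ∫ x, u n x * g x ∂μ) atTop (nhds (∫ x, v x * g x ∂μ))

namespace BoundedMeasurable

variable {f g : Q → ℝ}

theorem mul (hf : BoundedMeasurable f) (hg : BoundedMeasurable g) :
    BoundedMeasurable (fun x => f x * g x) := by
  obtain ⟨B, hB⟩ := hf.2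
  obtain ⟨C, hC⟩ := hg.2
  refine ⟨hf.1.mul hg.1, B * C, fun x => ?_⟩
  rw [abs_mul]
  exact mul_le_mul (hB x) (hC x) (abs_nonneg _) ((abs_nonneg _).trans (hB x))

theorem norm_le (hg : BoundedMeasurable g) : ∃ B : ℝ, ∀ᵐ x ∂μ, ‖g x‖ ≤ B :=
  let ⟨B, hB⟩ := hg.2
  ⟨B, ae_of_all _ fun x => (Real.norm_eq_abs _).trans_le (hB x)⟩

theorem integrable [IsFiniteMeasure μ] (hg : BoundedMeasurable g) : Integrable g μ :=
  let ⟨B, hB⟩ := hg.norm_le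
  Integrable.of_bound hg.1.aestronglyMeasurable B hB

end BoundedMeasurable

theorem MeasureTheory.Integrable.mul_boundedMeasurable {f g : Q → ℝ} (hf : Integrable f μ)
    (hg : BoundedMeasurable g) : Integrable (fun x => f x * g x) μ :=
  let ⟨_, hB⟩ := hg.norm_le (μ := μ)
  hf.mul_bdd hg.1.aestronglyMeasurable hB

theorem boundedMeasurable_indicator_one {s : Set Q} (hs : MeasurableSet s) :
    BoundedMeasurable (s.indicator 1) :=
  ⟨measurable_one.indicator hs, 1, fun x => by
    by_cases hx : x ∈ s <;> simp [hx]⟩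

theorem ContinuousOn.boundedMeasurable_comp {s : Set ℝ} {p : ℝ → ℝ} (hs : IsCompact s)
    (hp : ContinuousOn p s) {u : Q → ℝ} (hu : Measurable u) (hus : ∀ x, u x ∈ s) :
    BoundedMeasurable (fun x => p (u x)) := by
  obtain ⟨B, hB⟩ := hs.exists_bound_of_continuousOn hp
  exact ⟨hp.domRestrict.measurable.comp (hu.subtype_mk (h := hus)), B,
    fun x => (Real.norm_eq_abs _).symm.trans_le (hB _ (hus x))⟩

theorem integral_mul_indicator_one (f : Q → ℝ) {s : Set Q} (hs : MeasurableSet s) :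
    ∫ x, f x * s.indicator 1 x ∂μ = ∫ x in s, f x ∂μ := by
  rw [← integral_indicator hs]
  congr 1 with x
  by_cases hx : x ∈ s <;> simp [hx]

section Minty

variable [IsFiniteMeasure μ] {s : Set ℝ} {p : ℝ → ℝ} {u : ℕ → Q → ℝ} {v b c : Q → ℝ}

theorem integral_mul_le_of_tendstoWeakly (hp : MonotoneOn p s) (hus : ∀ n x, u n x ∈ s)
    (hvs : ∀ x, v x ∈ s) (hu : ∀ n, BoundedMeasurable (u n))
    (hpu : ∀ n, BoundedMeasurable (fun x => p (u n x))) (hv : BoundedMeasurable v)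
    (hpv : BoundedMeasurable (fun x => p (v x))) (h₁ : TendstoWeakly μ u v)
    (h₂ : TendstoWeakly μ (fun n x => p (u n x)) b)
    (h₃ : TendstoWeakly μ (fun n x => p (u n x) * u n x) c)
    {g : Q → ℝ} (hg : BoundedMeasurable g) (hg₀ : ∀ x, 0 ≤ g x) :
    ∫ x, b x * (v x * g x) ∂μ ≤ ∫ x, c x * g x ∂μ := by
  have hvg := hv.mul hg
  have hpvg := hpv.mul hg
  have hlim := (((h₃ g hg.1 hg.2).sub (h₂ _ hvg.1 hvg.2)).sub (h₁ _ hpvg.1 hpvg.2)).add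
    (tendsto_const_nhds (x := ∫ x, v x * (p (v x) * g x) ∂μ))
  have hterm_nonneg : ∀ n, 0 ≤ ∫ x, p (u n x) * u n x * g x ∂μ
      - ∫ x, p (u n x) * (v x * g x) ∂μ - ∫ x, u n x * (p (v x) * g x) ∂μ
      + ∫ x, v x * (p (v x) * g x) ∂μ := by
    intro n
    have i₁ := ((hpu n).mul (hu n)).mul hg |>.integrable (μ := μ)
    have i₂ := (hpu n).mul hvg |>.integrable (μ := μ)
    have i₃ := (hu n).mul hpvg |>.integrable (μ := μ)
    have i₄ := hv.mul hpvg |>.integrable (μ := μ)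
    have hexpand : (fun x => (p (u n x) - p (v x)) * (u n x - v x) * g x) = fun x =>
        p (u n x) * u n x * g x - p (u n x) * (v x * g x) - u n x * (p (v x) * g x)
          + v x * (p (v x) * g x) := by
      ext x; ring
    have hpointwise : ∀ x, 0 ≤ (p (u n x) - p (v x)) * (u n x - v x) * g x := fun x =>
      mul_nonneg ((monovaryOn_id_iff.2 hp).sub_mul_sub_nonneg (hvs x) (hus n x)) (hg₀ x)
    have hnonneg : 0 ≤ ∫ x, (p (u n x) - p (v x)) * (u n x - v x) * g x ∂μ :=
      integral_nonneg hpointwise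
    rwa [hexpand, integral_add ?_ i₄, integral_sub ?_ i₃, integral_sub i₁ i₂] at hnonneg
    exacts [i₁.sub i₂, (i₁.sub i₂).sub i₃]
  linarith [ge_of_tendsto' hlim hterm_nonneg]

theorem ae_mul_le_of_tendstoWeakly (hp : MonotoneOn p s) (hus : ∀ n x, u n x ∈ s)
    (hvs : ∀ x, v x ∈ s) (hu : ∀ n, BoundedMeasurable (u n))
    (hpu : ∀ n, BoundedMeasurable (fun x => p (u n x))) (hv : BoundedMeasurable v)
    (hpv : BoundedMeasurable (fun x => p (v x))) (hb : Integrable b μ) (hc : Integrable c μ)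
    (h₁ : TendstoWeakly μ u v) (h₂ : TendstoWeakly μ (fun n x => p (u n x)) b)
    (h₃ : TendstoWeakly μ (fun n x => p (u n x) * u n x) c) :
    ∀ᵐ x ∂μ, b x * v x ≤ c x := by
  have hbv : Integrable (fun x => b x * v x) μ := hb.mul_boundedMeasurable hv
  have hset : ∀ t, MeasurableSet t → μ t < ⊤ → 0 ≤ ∫ x in t, c x - b x * v x ∂μ := by
    intro t ht _
    have h1t := boundedMeasurable_indicator_one ht
    have hle := integral_mul_le_of_tendstoWeakly hp hus hvs hu hpu hv hpv h₁ h₂ h₃ h1t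
      (Set.indicator_nonneg fun _ _ => zero_le_one)
    rw [← integral_mul_indicator_one _ ht]
    simp only [sub_mul]
    rw [integral_sub (hc.mul_boundedMeasurable h1t) (hbv.mul_boundedMeasurable h1t)]
    simp only [mul_assoc]
    exact sub_nonneg.2 hle
  filter_upwards [ae_nonneg_of_forall_setIntegral_nonneg (hc.sub hbv) hset] with x hx
  exact sub_nonneg.1 hx

end Minty

end

theorem stmt_13_general {Q : Type*} [MeasurableSpace Q] (μ : Measure Q) [IsFiniteMeasure μ]
    (ρbar : ℝ) (p : ℝ → ℝ)
    (hpc : ContinuousOn p (Set.Icc 0 ρbar)) (hpm : MonotoneOn p (Set.Icc 0 ρbar))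
    (ρn : ℕ → Q → ℝ) (ρ : Q → ℝ) (b c : Q → ℝ)
    (hρn : ∀ n, Measurable (ρn n)) (hρnb : ∀ n x, ρn n x ∈ Set.Icc (0 : ℝ) ρbar)
    (hρ : Measurable ρ) (hρb : ∀ x, ρ x ∈ Set.Icc (0 : ℝ) ρbar)
    (hb : Integrable b μ) (hc : Integrable c μ)
    (h1 : ∀ g : Q → ℝ, Measurable g → (∃ B : ℝ, ∀ x, |g x| ≤ B) →
      Tendsto (fun n => ∫ x, ρn n x * g x ∂μ) atTop (nhds (∫ x, ρ x * g x ∂μ)))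
    (h2 : ∀ g : Q → ℝ, Measurable g → (∃ B : ℝ, ∀ x, |g x| ≤ B) →
      Tendsto (fun n => ∫ x, p (ρn n x) * g x ∂μ) atTop (nhds (∫ x, b x * g x ∂μ)))
    (h3 : ∀ g : Q → ℝ, Measurable g → (∃ B : ℝ, ∀ x, |g x| ≤ B) →
      Tendsto (fun n => ∫ x, p (ρn n x) * ρn n x * g x ∂μ) atTop
        (nhds (∫ x, c x * g x ∂μ))) :
    ∀ᵐ x ∂μ, b x * ρ x ≤ c x :=
  ae_mul_le_of_tendstoWeakly hpm hρnb hρb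
    (fun n => continuousOn_id.boundedMeasurable_comp isCompact_Icc (hρn n) (hρnb n))
    (fun n => hpc.boundedMeasurable_comp isCompact_Icc (hρn n) (hρnb n))
    (continuousOn_id.boundedMeasurable_comp isCompact_Icc hρ hρb)
    (hpc.boundedMeasurable_comp isCompact_Icc hρ hρb) hb hc h1 h2 h3

/-- Minty-type inequality for a monotone pressure: if `ρ_n ⇀ ρ`, `p(ρ_n) ⇀ b` and
`p(ρ_n) ρ_n ⇀ c` weakly (tested against every bounded measurable `g`), with `p`
continuous and nondecreasing on `[0, ρ̄]` and `ρ_n, ρ` taking values in `[0, ρ̄]`,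
then `c ≥ b ρ` almost everywhere. -/
theorem stmt_13 {Q : Type*} [MeasurableSpace Q] (μ : Measure Q) [IsFiniteMeasure μ]
    (ρbar : ℝ) (hρbar : 0 < ρbar) (p : ℝ → ℝ)
    (hpc : ContinuousOn p (Set.Icc 0 ρbar)) (hpm : MonotoneOn p (Set.Icc 0 ρbar))
    (ρn : ℕ → Q → ℝ) (ρ : Q → ℝ) (b c : Q → ℝ)
    (hρn : ∀ n, Measurable (ρn n)) (hρnb : ∀ n x, ρn n x ∈ Set.Icc (0 : ℝ) ρbar)
    (hρ : Measurable ρ) (hρb : ∀ x, ρ x ∈ Set.Icc (0 : ℝ) ρbar)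
    (hb : Integrable b μ) (hc : Integrable c μ)
    (h1 : ∀ g : Q → ℝ, Measurable g → (∃ B : ℝ, ∀ x, |g x| ≤ B) →
      Tendsto (fun n => ∫ x, ρn n x * g x ∂μ) atTop (nhds (∫ x, ρ x * g x ∂μ)))
    (h2 : ∀ g : Q → ℝ, Measurable g → (∃ B : ℝ, ∀ x, |g x| ≤ B) →
      Tendsto (fun n => ∫ x, p (ρn n x) * g x ∂μ) atTop (nhds (∫ x, b x * g x ∂μ)))
    (h3 : ∀ g : Q → ℝ, Measurable g → (∃ B : ℝ, ∀ x, |g x| ≤ B) →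
      Tendsto (fun n => ∫ x, p (ρn n x) * ρn n x * g x ∂μ) atTop
        (nhds (∫ x, c x * g x ∂μ))) :
    ∀ᵐ x ∂μ, b x * ρ x ≤ c x :=
  stmt_13_general μ ρbar p hpc hpm ρn ρ b c hρn hρnb hρ hρb hb hc h1 h2 h3
end

section
/- Let (Q, μ) be a finite measure space, ρ̄ > 0, a > 0, γ ≥ 1, and let p : [0, ρ̄] → ℝ be continuous and satisfy (p(x) − p(y))·(x − y) ≥ a·|x − y|^{γ+1} for all x, y ∈ [0, ρ̄]. Let ρ_n, ρ : Q → [0, ρ̄] be measurable functions and b, c : Q → ℝ be integrable functions such that for every bounded measurable g : Q → ℝ one has ∫_Q ρ_n·g dμ → ∫_Q ρ·g dμ, ∫_Q p(ρ_n)·g dμ → ∫_Q b·g dμ, and ∫_Q p(ρ_n)·ρ_n·g dμ → ∫_Q c·g dμ as n → ∞. Then a·limsup_{n→∞} ∫_Q |ρ_n − ρ|^{γ+1} dμ ≤ ∫_Q (c − b·ρ) dμ. -/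
/-!
Integrating the coercivity inequality at `(ρₙ(x), ρ(x))` gives
`a ∫ |ρₙ - ρ|^{γ+1} ≤ ∫ (p(ρₙ) - p(ρ))(ρₙ - ρ)`. Expanding the right-hand side, three of its four
terms pair a weakly convergent sequence with a fixed bounded function (`1`, `ρ` or `p(ρ)`) and the
fourth is constant, so it converges to `∫ c - ∫ b ρ - ∫ p(ρ) ρ + ∫ p(ρ) ρ = ∫ (c - b ρ)`.
-/

open MeasureTheory Filter Topology

section

variable {Q : Type*} [MeasurableSpace Q]

def IsBoundedMeasurable (f : Q → ℝ) : Prop :=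
  Measurable f ∧ ∃ B : ℝ, ∀ x, |f x| ≤ B

/-- Weak convergence in `L¹(μ)`, tested against bounded measurable functions. -/
def WeaklyTendsto (μ : Measure Q) (f : ℕ → Q → ℝ) (F : Q → ℝ) : Prop :=
  ∀ g : Q → ℝ, Measurable g → (∃ B : ℝ, ∀ x, |g x| ≤ B) →
    Tendsto (fun n => ∫ x, f n x * g x ∂μ) atTop (𝓝 (∫ x, F x * g x ∂μ))

namespace IsBoundedMeasurable

variable {f g : Q → ℝ}

theorem sub (hf : IsBoundedMeasurable f) (hg : IsBoundedMeasurable g) :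
    IsBoundedMeasurable fun x => f x - g x := by
  obtain ⟨hfm, B, hB⟩ := hf
  obtain ⟨hgm, C, hC⟩ := hg
  exact ⟨hfm.sub hgm, B + C, fun x => (abs_sub _ _).trans (add_le_add (hB x) (hC x))⟩

theorem mul (hf : IsBoundedMeasurable f) (hg : IsBoundedMeasurable g) :
    IsBoundedMeasurable fun x => f x * g x := by
  obtain ⟨hfm, B, hB⟩ := hf
  obtain ⟨hgm, C, hC⟩ := hg
  refine ⟨hfm.mul hgm, B * C, fun x => ?_⟩
  rw [abs_mul]
  exact mul_le_mul (hB x) (hC x) (abs_nonneg _) ((abs_nonneg _).trans (hB x))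

theorem integrable (hf : IsBoundedMeasurable f) (μ : Measure Q) [IsFiniteMeasure μ] :
    Integrable f μ :=
  let ⟨hfm, B, hB⟩ := hf
  .of_bound hfm.aestronglyMeasurable B (.of_forall hB)

end IsBoundedMeasurable

theorem ContinuousOn.measurable_comp {α β γ : Type*} [MeasurableSpace α]
    [TopologicalSpace β] [MeasurableSpace β] [OpensMeasurableSpace β]
    [TopologicalSpace γ] [MeasurableSpace γ] [BorelSpace γ]
    {p : β → γ} {s : Set β} {f : α → β} (hp : ContinuousOn p s) (hf : Measurable f)
    (hfs : ∀ x, f x ∈ s) : Measurable fun x => p (f x) :=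
  hp.domRestrict.measurable.comp (hf.subtype_mk (h := hfs))

theorem ContinuousOn.isBoundedMeasurable_comp {β : Type*} [TopologicalSpace β]
    [MeasurableSpace β] [OpensMeasurableSpace β] {p : β → ℝ} {s : Set β} {f : Q → β}
    (hp : ContinuousOn p s) (hs : IsCompact s) (hf : Measurable f) (hfs : ∀ x, f x ∈ s) :
    IsBoundedMeasurable fun x => p (f x) :=
  let ⟨B, hB⟩ := hs.exists_bound_of_continuousOn hp
  ⟨hp.measurable_comp hf hfs, B, fun x => hB _ (hfs x)⟩

theorem WeaklyTendsto.tendsto_integral {μ : Measure Q} {f : ℕ → Q → ℝ} {F : Q → ℝ}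
    (h : WeaklyTendsto μ f F) : Tendsto (fun n => ∫ x, f n x ∂μ) atTop (𝓝 (∫ x, F x ∂μ)) := by
  simpa only [mul_one] using h (fun _ => 1) measurable_const ⟨1, fun _ => by norm_num⟩

theorem tendsto_integral_sub_mul_sub {μ : Measure Q} [IsFiniteMeasure μ]
    {u v : ℕ → Q → ℝ} {U V b c : Q → ℝ}
    (hu : ∀ n, IsBoundedMeasurable (u n)) (hU : IsBoundedMeasurable U)
    (hv : ∀ n, IsBoundedMeasurable (v n)) (hV : IsBoundedMeasurable V)
    (hb : Integrable b μ) (hc : Integrable c μ)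
    (huU : WeaklyTendsto μ u U) (hvb : WeaklyTendsto μ v b)
    (hvuc : WeaklyTendsto μ (fun n x => v n x * u n x) c) :
    Tendsto (fun n => ∫ x, (v n x - V x) * (u n x - U x) ∂μ) atTop
      (𝓝 (∫ x, (c x - b x * U x) ∂μ)) := by
  have hexpand : ∀ n, ∫ x, (v n x - V x) * (u n x - U x) ∂μ =
      (∫ x, v n x * u n x ∂μ) - (∫ x, v n x * U x ∂μ) - (∫ x, u n x * V x ∂μ)
        + ∫ x, U x * V x ∂μ := by
    intro n
    have hvu := ((hv n).mul (hu n)).integrable μ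
    have hvU := ((hv n).mul hU).integrable μ
    have huV := ((hu n).mul hV).integrable μ
    calc ∫ x, (v n x - V x) * (u n x - U x) ∂μ
        = ∫ x, (v n x * u n x - v n x * U x - u n x * V x + U x * V x) ∂μ := by
          congr 1 with x
          ring
      _ = _ := by
          rw [integral_add ?_ ((hU.mul hV).integrable μ), integral_sub ?_ huV,
            integral_sub hvu hvU]
          exacts [hvu.sub hvU, (hvu.sub hvU).sub huV]
  have hbU : Integrable (fun x => b x * U x) μ := by
    obtain ⟨hUm, B, hB⟩ := hU
    exact hb.mul_bdd hUm.aestronglyMeasurable (.of_forall hB)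
  have hlim := ((hvuc.tendsto_integral.sub (hvb U hU.1 hU.2)).sub (huU V hV.1 hV.2)).add
    (tendsto_const_nhds (x := ∫ x, U x * V x ∂μ))
  rw [sub_add_cancel, ← integral_sub hc hbU] at hlim
  simpa only [hexpand] using hlim

theorem mul_limsup_le_of_tendsto {ι : Type*} {l : Filter ι} [l.NeBot] {I J : ι → ℝ} {a L : ℝ}
    (ha : 0 < a) (hI : ∀ i, 0 ≤ I i) (hIJ : ∀ i, a * I i ≤ J i) (hJ : Tendsto J l (𝓝 L)) :
    a * limsup I l ≤ L := by
  have hJa := hJ.div_const a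
  rw [← le_div_iff₀' ha, ← hJa.limsup_eq]
  exact limsup_le_limsup (.of_forall fun i => (le_div_iff₀' ha).2 (hIJ i))
    (isCoboundedUnder_le_of_le l hI) hJa.isBoundedUnder_le

end

theorem stmt_14_general {Q : Type*} [MeasurableSpace Q] (μ : Measure Q) [IsFiniteMeasure μ]
    (ρbar a γ : ℝ) (ha : 0 < a) (p : ℝ → ℝ)
    (hpc : ContinuousOn p (Set.Icc 0 ρbar))
    (hcoerc : ∀ x ∈ Set.Icc (0 : ℝ) ρbar, ∀ y ∈ Set.Icc (0 : ℝ) ρbar,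
      a * |x - y| ^ (γ + 1) ≤ (p x - p y) * (x - y))
    (ρn : ℕ → Q → ℝ) (ρ : Q → ℝ) (b c : Q → ℝ)
    (hρn : ∀ n, Measurable (ρn n)) (hρnb : ∀ n x, ρn n x ∈ Set.Icc (0 : ℝ) ρbar)
    (hρ : Measurable ρ) (hρb : ∀ x, ρ x ∈ Set.Icc (0 : ℝ) ρbar)
    (hb : Integrable b μ) (hc : Integrable c μ)
    (h1 : ∀ g : Q → ℝ, Measurable g → (∃ B : ℝ, ∀ x, |g x| ≤ B) →
      Tendsto (fun n => ∫ x, ρn n x * g x ∂μ) atTop (nhds (∫ x, ρ x * g x ∂μ)))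
    (h2 : ∀ g : Q → ℝ, Measurable g → (∃ B : ℝ, ∀ x, |g x| ≤ B) →
      Tendsto (fun n => ∫ x, p (ρn n x) * g x ∂μ) atTop (nhds (∫ x, b x * g x ∂μ)))
    (h3 : ∀ g : Q → ℝ, Measurable g → (∃ B : ℝ, ∀ x, |g x| ≤ B) →
      Tendsto (fun n => ∫ x, p (ρn n x) * ρn n x * g x ∂μ) atTop
        (nhds (∫ x, c x * g x ∂μ))) :
    a * Filter.limsup (fun n => ∫ x, |ρn n x - ρ x| ^ (γ + 1) ∂μ) atTop
      ≤ ∫ x, (c x - b x * ρ x) ∂μ := by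
  have hρn' (n : ℕ) : IsBoundedMeasurable (ρn n) :=
    continuousOn_id.isBoundedMeasurable_comp isCompact_Icc (hρn n) (hρnb n)
  have hρ' : IsBoundedMeasurable ρ :=
    continuousOn_id.isBoundedMeasurable_comp isCompact_Icc hρ hρb
  have hpρn (n : ℕ) : IsBoundedMeasurable fun x => p (ρn n x) :=
    hpc.isBoundedMeasurable_comp isCompact_Icc (hρn n) (hρnb n)
  have hpρ : IsBoundedMeasurable fun x => p (ρ x) :=
    hpc.isBoundedMeasurable_comp isCompact_Icc hρ hρb
  refine mul_limsup_le_of_tendsto ha (fun n => integral_nonneg fun x => by positivity)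
    (fun n => ?_) (tendsto_integral_sub_mul_sub hρn' hρ' hpρn hpρ hb hc h1 h2 h3)
  rw [← integral_const_mul]
  exact integral_mono_of_nonneg (.of_forall fun x => by positivity)
    ((((hpρn n).sub hpρ).mul ((hρn' n).sub hρ')).integrable μ)
    (.of_forall fun x => hcoerc _ (hρnb n x) _ (hρb x))

/-- Coercive Minty-type inequality: if `p` is continuous on `[0, ρ̄]` and satisfies
`(p(x) − p(y))(x − y) ≥ a |x − y|^{γ+1}`, and `ρ_n ⇀ ρ`, `p(ρ_n) ⇀ b`,
`p(ρ_n) ρ_n ⇀ c` weakly (tested against every bounded measurable `g`), then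
`a limsup_n ∫ |ρ_n − ρ|^{γ+1} ≤ ∫ (c − b ρ)`. -/
theorem stmt_14 {Q : Type*} [MeasurableSpace Q] (μ : Measure Q) [IsFiniteMeasure μ]
    (ρbar a γ : ℝ) (hρbar : 0 < ρbar) (ha : 0 < a) (hγ : 1 ≤ γ) (p : ℝ → ℝ)
    (hpc : ContinuousOn p (Set.Icc 0 ρbar))
    (hcoerc : ∀ x ∈ Set.Icc (0 : ℝ) ρbar, ∀ y ∈ Set.Icc (0 : ℝ) ρbar,
      a * |x - y| ^ (γ + 1) ≤ (p x - p y) * (x - y))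
    (ρn : ℕ → Q → ℝ) (ρ : Q → ℝ) (b c : Q → ℝ)
    (hρn : ∀ n, Measurable (ρn n)) (hρnb : ∀ n x, ρn n x ∈ Set.Icc (0 : ℝ) ρbar)
    (hρ : Measurable ρ) (hρb : ∀ x, ρ x ∈ Set.Icc (0 : ℝ) ρbar)
    (hb : Integrable b μ) (hc : Integrable c μ)
    (h1 : ∀ g : Q → ℝ, Measurable g → (∃ B : ℝ, ∀ x, |g x| ≤ B) →
      Tendsto (fun n => ∫ x, ρn n x * g x ∂μ) atTop (nhds (∫ x, ρ x * g x ∂μ)))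
    (h2 : ∀ g : Q → ℝ, Measurable g → (∃ B : ℝ, ∀ x, |g x| ≤ B) →
      Tendsto (fun n => ∫ x, p (ρn n x) * g x ∂μ) atTop (nhds (∫ x, b x * g x ∂μ)))
    (h3 : ∀ g : Q → ℝ, Measurable g → (∃ B : ℝ, ∀ x, |g x| ≤ B) →
      Tendsto (fun n => ∫ x, p (ρn n x) * ρn n x * g x ∂μ) atTop
        (nhds (∫ x, c x * g x ∂μ))) :
    a * Filter.limsup (fun n => ∫ x, |ρn n x - ρ x| ^ (γ + 1) ∂μ) atTop
      ≤ ∫ x, (c x - b x * ρ x) ∂μ :=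
  stmt_14_general μ ρbar a γ ha p hpc hcoerc ρn ρ b c hρn hρnb hρ hρb hb hc h1 h2 h3
end

section
/- Let (Q, μ) be a finite measure space, ρ̄ > 0, α ∈ (0, 1) and γ ≥ 1. Let ρ_n, ρ : Q → [0, ρ̄] be measurable functions and L : Q → ℝ be integrable, and suppose that for every bounded measurable g : Q → ℝ one has ∫_Q ρ_n log ρ_n · g dμ → ∫_Q L·g dμ as n → ∞ (with the convention 0·log 0 = 0). Then there is a constant C > 0, depending only on α and ρ̄, such that |∫_Q (L − ρ·log ρ) dμ| ≤ C · μ(Q)^{1 − α/(γ+1)} · limsup_{n→∞} ( ∫_Q |ρ_n − ρ|^{γ+1} dμ )^{α/(γ+1)}. -/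
open MeasureTheory Filter Set

/-!
Testing the weak convergence against `g = 1` gives `∫ ρₙ log ρₙ → ∫ L`, so the defect is the limit
of `|∫ ρₙ log ρₙ - ∫ ρ log ρ|`. On `[0, ρ̄]` the function `x log x` is `α`-Hölder: for `x ≤ y`,
`y log y - x log x = (y - x) log y + x log (y / x)`, where `0 ≤ x log (y / x) ≤ y - x`, and
`(y - x) |log y| ≤ (y - x) ^ α / (1 - α) + ρ̄ (y - x)` because `y - x ≤ y`. Hence the defect is
bounded by `C limsup ∫ |ρₙ - ρ| ^ α`, and Hölder's inequality with exponent `(γ + 1) / α` against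
the constant `1` turns `∫ |ρₙ - ρ| ^ α` into the `L^{γ+1}` distance times a power of `μ(Q)`.
-/

namespace Real

lemma le_rpow_mul_rpow_of_le {h y α : ℝ} (h0 : 0 ≤ h) (hhy : h ≤ y) (hα1 : α ≤ 1) :
    h ≤ h ^ α * y ^ (1 - α) :=
  calc h = h ^ α * h ^ (1 - α) := by rw [← rpow_add' h0 (by norm_num), add_sub_cancel, rpow_one]
    _ ≤ h ^ α * y ^ (1 - α) := by gcongr

lemma neg_log_le_rpow_div {y α : ℝ} (hy : 0 < y) (hα : α < 1) :
    -log y ≤ y ^ (α - 1) / (1 - α) := by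
  have h := log_le_rpow_div (inv_nonneg.2 hy.le) (sub_pos.2 hα)
  rwa [log_inv, inv_rpow hy.le, ← rpow_neg hy.le, neg_sub] at h

lemma mul_abs_log_le {h y b α : ℝ} (h0 : 0 ≤ h) (hhy : h ≤ y) (hy : 0 < y) (hyb : y ≤ b)
    (hα1 : α < 1) : h * |log y| ≤ h ^ α / (1 - α) + b * h := by
  have hA : 0 ≤ y ^ (α - 1) / (1 - α) := div_nonneg (rpow_nonneg hy.le _) (by linarith)
  have habs_log : |log y| ≤ y ^ (α - 1) / (1 - α) + y :=
    abs_le.2 ⟨by linarith [neg_log_le_rpow_div hy hα1], by linarith [log_le_self hy.le]⟩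
  have hpow : h * y ^ (α - 1) ≤ h ^ α :=
    calc h * y ^ (α - 1) ≤ h ^ α * y ^ (1 - α) * y ^ (α - 1) := by
          gcongr; exact le_rpow_mul_rpow_of_le h0 hhy hα1.le
      _ = h ^ α := by rw [mul_assoc, ← rpow_add hy]; norm_num
  calc h * |log y| ≤ h * (y ^ (α - 1) / (1 - α) + y) := by gcongr
    _ = h * y ^ (α - 1) / (1 - α) + h * y := by ring
    _ ≤ h ^ α / (1 - α) + b * h :=
        add_le_add (div_le_div_of_nonneg_right hpow (by linarith)) (by nlinarith)

lemma abs_mul_log_sub_mul_log_le_of_le {x y b α : ℝ} (hx : 0 ≤ x) (hxy : x ≤ y) (hyb : y ≤ b)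
    (hα1 : α < 1) :
    |y * log y - x * log x| ≤ (1 / (1 - α) + (b + 1) * b ^ (1 - α)) * (y - x) ^ α := by
  rcases (hx.trans hxy).eq_or_lt with hy0 | hy0
  · obtain rfl : x = 0 := by linarith
    subst hy0
    simpa using mul_nonneg (add_nonneg (one_div_nonneg.2 (by linarith))
      (mul_nonneg (by linarith) (rpow_nonneg hyb _))) (rpow_nonneg le_rfl α)
  set h := y - x
  have h0 : 0 ≤ h := sub_nonneg.2 hxy
  have hx_log : 0 ≤ x * (log y - log x) ∧ x * (log y - log x) ≤ h := by
    rcases hx.eq_or_lt with rfl | hx0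
    · simpa using h0
    refine ⟨mul_nonneg hx (sub_nonneg.2 (log_le_log hx0 hxy)), ?_⟩
    have key := mul_le_mul_of_nonneg_left (log_le_sub_one_of_pos (div_pos hy0 hx0)) hx
    rwa [log_div hy0.ne' hx0.ne', mul_sub_one, mul_div_cancel₀ _ hx0.ne'] at key
  have hsplit : y * log y - x * log x = h * log y + x * (log y - log x) := by ring
  have hb : 0 ≤ b := hy0.le.trans hyb
  calc |y * log y - x * log x| = |h * log y + x * (log y - log x)| := by rw [hsplit]
    _ ≤ |h * log y| + |x * (log y - log x)| := abs_add_le _ _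
    _ ≤ h * |log y| + h := by
        rw [abs_mul, abs_of_nonneg h0, abs_of_nonneg hx_log.1]
        linarith [hx_log.2]
    _ ≤ h ^ α / (1 - α) + (b + 1) * h := by
        linarith [mul_abs_log_le h0 (sub_le_self y hx) hy0 hyb hα1]
    _ ≤ h ^ α / (1 - α) + (b + 1) * (h ^ α * b ^ (1 - α)) := by
        gcongr; exact le_rpow_mul_rpow_of_le h0 (by linarith) hα1.le
    _ = (1 / (1 - α) + (b + 1) * b ^ (1 - α)) * h ^ α := by ring

theorem abs_mul_log_sub_mul_log_le {x y b α : ℝ} (hx : x ∈ Icc 0 b) (hy : y ∈ Icc 0 b)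
    (hα1 : α < 1) :
    |x * log x - y * log y| ≤ (1 / (1 - α) + (b + 1) * b ^ (1 - α)) * |x - y| ^ α := by
  rcases le_total x y with hxy | hyx
  · rw [abs_sub_comm, abs_sub_comm x, abs_of_nonneg (sub_nonneg.2 hxy)]
    exact abs_mul_log_sub_mul_log_le_of_le hx.1 hxy hy.2 hα1
  · rw [abs_of_nonneg (sub_nonneg.2 hyx)]
    exact abs_mul_log_sub_mul_log_le_of_le hy.1 hyx hx.2 hα1

end Real

section FiniteMeasure

variable {Q : Type*} [MeasurableSpace Q] {μ : Measure Q} [IsFiniteMeasure μ]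

lemma integrable_mul_log_of_mem_Icc {f : Q → ℝ} {b : ℝ} (hf : Measurable f)
    (hfb : ∀ x, f x ∈ Icc 0 b) : Integrable (fun x => f x * Real.log (f x)) μ := by
  obtain ⟨K, hK⟩ := isCompact_Icc.exists_bound_of_continuousOn
    (Real.continuous_mul_log.continuousOn (s := Icc 0 b))
  exact .of_bound (Real.continuous_mul_log.measurable.comp hf).aestronglyMeasurable K
    (ae_of_all _ fun x => hK _ (hfb x))

lemma abs_integral_mul_log_sub_le {f g : Q → ℝ} {b α : ℝ} (hf : Measurable f) (hg : Measurable g)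
    (hfb : ∀ x, f x ∈ Icc 0 b) (hgb : ∀ x, g x ∈ Icc 0 b) (hα0 : 0 ≤ α) (hα1 : α < 1) :
    |∫ x, f x * Real.log (f x) ∂μ - ∫ x, g x * Real.log (g x) ∂μ| ≤
      (1 / (1 - α) + (b + 1) * b ^ (1 - α)) * ∫ x, |f x - g x| ^ α ∂μ := by
  have hdist : ∀ x, |f x - g x| ≤ b := fun x => by
    simpa [Real.dist_eq] using Real.dist_le_of_mem_Icc (hfb x) (hgb x)
  have hint : Integrable (fun x => |f x - g x| ^ α) μ :=
    .of_bound ((hf.sub hg).abs.pow_const α).aestronglyMeasurable (b ^ α) (ae_of_all _ fun x => by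
      rw [Real.norm_eq_abs, abs_of_nonneg (by positivity)]
      exact Real.rpow_le_rpow (abs_nonneg _) (hdist x) hα0)
  rw [← integral_sub (integrable_mul_log_of_mem_Icc hf hfb) (integrable_mul_log_of_mem_Icc hg hgb),
    ← integral_const_mul]
  exact abs_integral_le_integral_abs.trans <| integral_mono_of_nonneg
    (ae_of_all _ fun _ => abs_nonneg _) (hint.const_mul _)
    (ae_of_all _ fun x => Real.abs_mul_log_sub_mul_log_le (hfb x) (hgb x) hα1)

lemma integral_abs_rpow_le {f : Q → ℝ} {α p : ℝ} (hα : 0 < α) (hαp : α < p)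
    (hf : MemLp f (ENNReal.ofReal p) μ) :
    ∫ x, |f x| ^ α ∂μ ≤ (∫ x, |f x| ^ p ∂μ) ^ (α / p) * μ.real univ ^ (1 - α / p) := by
  have hp : 1 < p / α := (one_lt_div hα).2 hαp
  have hmem : MemLp (fun x => |f x| ^ α) (ENNReal.ofReal (p / α)) μ := by
    simpa [ENNReal.ofReal_div_of_pos hα, ENNReal.toReal_ofReal hα.le] using
      hf.norm_rpow_div (ENNReal.ofReal α)
  have key := integral_mul_le_Lp_mul_Lq_of_nonneg (.conjExponent hp)
    (ae_of_all _ fun x => Real.rpow_nonneg (abs_nonneg (f x)) α) (ae_of_all _ fun _ => zero_le_one)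
    hmem (memLp_const (1 : ℝ))
  have hpow : ∀ x, (|f x| ^ α) ^ (p / α) = |f x| ^ p := fun x => by
    rw [← Real.rpow_mul (abs_nonneg _), mul_div_cancel₀ _ hα.ne']
  have hconj : 1 / (p / α).conjExponent = 1 - α / p := by
    have hp0 : p ≠ 0 := by linarith
    rw [Real.conjExponent, one_div_div]
    field_simp
  simpa [hpow, hconj, one_div_div] using key

end FiniteMeasure

lemma le_mul_limsup_rpow_of_tendsto {ι : Type*} {F : Filter ι} [F.NeBot] {u b : ι → ℝ} {l K θ : ℝ}
    (hu : Tendsto u F (nhds l)) (hK : 0 ≤ K) (hθ : 0 ≤ θ) (hb0 : ∀ i, 0 ≤ b i)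
    (hb : IsBoundedUnder (· ≤ ·) F b) (hub : ∀ i, u i ≤ K * b i ^ θ) :
    l ≤ K * limsup b F ^ θ := by
  -- `t ↦ K * t ^ θ` is monotone and continuous only on `[0, ∞)`; clamping extends it to `ℝ`
  set φ : ℝ → ℝ := fun t => K * max t 0 ^ θ
  have hφ : Monotone φ := fun s t hst => by
    dsimp only [φ]; gcongr
  have hφc : ContinuousAt φ (limsup b F) := continuousAt_const.mul <|
    (Real.continuousAt_rpow_const _ _ (.inr hθ)).comp (continuous_id.max continuous_const).continuousAt
  have hcob : IsCoboundedUnder (· ≤ ·) F b := (isBoundedUnder_of ⟨0, hb0⟩).isCoboundedUnder_le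
  have hB : 0 ≤ limsup b F := le_limsup_of_frequently_le (.of_forall hb0) hb
  calc l = limsup u F := hu.limsup_eq.symm
    _ ≤ limsup (φ ∘ b) F := limsup_le_limsup
        (.of_forall fun i => by simpa [φ, max_eq_left (hb0 i)] using hub i)
        hu.isCoboundedUnder_le (hφ.isBoundedUnder_le_comp hb)
    _ = φ (limsup b F) := (hφ.map_limsup_of_continuousAt b hφc hb hcob).symm
    _ = K * limsup b F ^ θ := by simp [φ, max_eq_left hB]

/-- Control of the renormalized oscillation defect: there is a constant `C > 0`,
depending only on `α ∈ (0,1)` and `ρ̄`, such that whenever `ρ_n, ρ` take values in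
`[0, ρ̄]` on a finite measure space and `ρ_n log ρ_n ⇀ L` weakly (tested against every
bounded measurable `g`), one has
`|∫ (L − ρ log ρ)| ≤ C μ(Q)^{1 − α/(γ+1)} (limsup_n ∫ |ρ_n − ρ|^{γ+1})^{α/(γ+1)}`. -/
theorem stmt_15 (ρbar α γ : ℝ) (hρbar : 0 < ρbar) (hα : α ∈ Set.Ioo (0 : ℝ) 1)
    (hγ : 1 ≤ γ) :
    ∃ C > 0, ∀ (Q : Type) [MeasurableSpace Q] (μ : Measure Q), IsFiniteMeasure μ →
      ∀ (ρn : ℕ → Q → ℝ) (ρ : Q → ℝ) (L : Q → ℝ),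
      (∀ n, Measurable (ρn n)) → (∀ n x, ρn n x ∈ Set.Icc (0 : ℝ) ρbar) →
      Measurable ρ → (∀ x, ρ x ∈ Set.Icc (0 : ℝ) ρbar) → Integrable L μ →
      (∀ g : Q → ℝ, Measurable g → (∃ B : ℝ, ∀ x, |g x| ≤ B) →
        Tendsto (fun n => ∫ x, ρn n x * Real.log (ρn n x) * g x ∂μ) atTop
          (nhds (∫ x, L x * g x ∂μ))) →
      |∫ x, (L x - ρ x * Real.log (ρ x)) ∂μ| ≤
        C * (μ Set.univ).toReal ^ (1 - α / (γ + 1)) *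
          (Filter.limsup (fun n => ∫ x, |ρn n x - ρ x| ^ (γ + 1) ∂μ) atTop)
            ^ (α / (γ + 1)) := by
  obtain ⟨hα0, hα1⟩ := hα
  have hα1' : 0 < 1 - α := sub_pos.2 hα1
  refine ⟨1 / (1 - α) + (ρbar + 1) * ρbar ^ (1 - α), by positivity, ?_⟩
  intro Q _ μ _ ρn ρ L hρn_meas hρn_mem hρ_meas hρ_mem hL hweak
  have hdist : ∀ n x, ‖ρn n x - ρ x‖ ≤ ρbar := fun n x => by
    simpa [Real.dist_eq] using Real.dist_le_of_mem_Icc (hρn_mem n x) (hρ_mem x)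
  have hlim : Tendsto (fun n => ∫ x, ρn n x * Real.log (ρn n x) ∂μ) atTop (nhds (∫ x, L x ∂μ)) := by
    simpa using hweak 1 measurable_const ⟨1, by simp⟩
  rw [integral_sub hL (integrable_mul_log_of_mem_Icc hρ_meas hρ_mem)]
  refine le_mul_limsup_rpow_of_tendsto (hlim.sub_const _).abs (by positivity) (by positivity)
    (fun n => integral_nonneg fun x => by positivity) ?_ fun n => ?_
  · refine isBoundedUnder_of ⟨ρbar ^ (γ + 1) * μ.real univ, fun n => ?_⟩
    refine (Real.le_norm_self _).trans (norm_integral_le_of_norm_le_const (ae_of_all _ fun x => ?_))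
    rw [Real.norm_eq_abs, abs_of_nonneg (by positivity)]
    exact Real.rpow_le_rpow (abs_nonneg _) (hdist n x) (by linarith)
  · calc _ ≤ (1 / (1 - α) + (ρbar + 1) * ρbar ^ (1 - α)) * ∫ x, |ρn n x - ρ x| ^ α ∂μ :=
          abs_integral_mul_log_sub_le (hρn_meas n) hρ_meas (hρn_mem n) hρ_mem hα0.le hα1
      _ ≤ _ := by
          rw [mul_assoc, mul_comm ((μ univ).toReal ^ _)]
          gcongr
          exact integral_abs_rpow_le hα0 (by linarith)
            (.of_bound ((hρn_meas n).sub hρ_meas).aestronglyMeasurable ρbar (ae_of_all _ (hdist n)))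
end
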